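/- arXiv:1004.1633 — 5 statements merged into one kernel-verified Lean document; each statement's English description precedes it below -/
import Mathlib

section
/- For any positive integer D (even or odd) and any integer k, the complex number a_k = (1/D)·∑_{j=0}^{D-1} exp(i·θ_j)·exp(2πi·jk/D), where θ_j = πj²/D if D is even and θ_j = 2πj²/D if D is odd, satisfies |a_k| = 1/√D. -/
/-!
Write the summand as `z ^ (j ^ 2) * w ^ j`, where `w ^ D = 1` and `z = e^{iπ/D}` is a primitive
`2D`-th root of unity for even `D`, `z = e^{2πi/D}` a primitive `D`-th root for odd `D`. This phase
is `D`-periodic, so it is a unimodular function `f` on `ZMod D`, and `f (x + m) * conj (f x)` is a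
constant times the character `x ↦ z ^ (2 * m * x)`, which is nontrivial for `m ≠ 0`. All nontrivial
autocorrelations of `f` therefore vanish, and expanding `|∑ₓ f x|²` leaves only the diagonal `D`.
-/

open Finset Complex ComplexConjugate

theorem RCLike.norm_sq_sum_eq_card_of_autocorrelation {𝕜 G : Type*} [RCLike 𝕜] [AddCommGroup G]
    [Fintype G] {f : G → 𝕜} (hf : ∀ x, ‖f x‖ = 1)
    (hcorr : ∀ m ≠ 0, ∑ x, f (x + m) * conj (f x) = 0) :
    ‖∑ x, f x‖ ^ 2 = Fintype.card G := by
  have hsq : ((‖∑ x, f x‖ ^ 2 : ℝ) : 𝕜) = ∑ m, ∑ x, f (x + m) * conj (f x) := by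
    rw [RCLike.ofReal_pow, ← RCLike.mul_conj, map_sum, sum_mul_sum, sum_comm]
    refine (Fintype.sum_congr _ _ fun y => ?_).trans sum_comm
    exact (Fintype.sum_equiv (Equiv.addLeft y) _ _ fun m => rfl).symm
  rw [sum_eq_single 0 (fun m _ hm => hcorr m hm) (by simp)] at hsq
  simp only [add_zero, RCLike.mul_conj, hf, RCLike.ofReal_one, one_pow, sum_const, card_univ,
    nsmul_eq_mul, mul_one] at hsq
  exact_mod_cast hsq

theorem sum_range_eq_sum_zmod_val {M : Type*} [AddCommMonoid M] (D : ℕ) [NeZero D] (f : ℕ → M) :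
    ∑ j ∈ range D, f j = ∑ x : ZMod D, f x.val := by
  obtain ⟨n, rfl⟩ := Nat.exists_eq_succ_of_ne_zero (NeZero.ne D)
  exact (Fin.sum_univ_eq_sum_range f _).symm

theorem geom_sum_eq_zero_of_pow_eq_one {K : Type*} [Field K] {ζ : K} {n : ℕ} (hζ : ζ ^ n = 1)
    (hζ1 : ζ ≠ 1) : ∑ i ∈ range n, ζ ^ i = 0 := by
  rw [geom_sum_eq hζ1, hζ, sub_self, zero_div]

theorem norm_sum_range_quadratic_phase {D N : ℕ} (hD : D ≠ 0) {z w : ℂ} (hz : IsPrimitiveRoot z N)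
    (hN : N ∣ 2 * D) (hND : N ∣ D ^ 2) (hNm : ∀ m, N ∣ 2 * m → D ∣ m) (hw : w ^ D = 1) :
    ‖∑ j ∈ range D, z ^ (j ^ 2) * w ^ j‖ = √D := by
  have : NeZero D := ⟨hD⟩
  set g : ℕ → ℂ := fun j => z ^ (j ^ 2) * w ^ j with hg
  have hshift : ∀ a b, g (a + b) = g a * ((z ^ (2 * b)) ^ a * (z ^ (b ^ 2) * w ^ b)) := by
    intro a b; simp only [hg]; ring
  have hz2D : z ^ (2 * D) = 1 := hz.pow_eq_one_iff_dvd _ |>.2 hN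
  have hperiodic : Function.Periodic g D := fun a => by
    rw [hshift, ← pow_mul, mul_comm, pow_mul, hz2D, hz.pow_eq_one_iff_dvd _ |>.2 hND, hw]
    simp
  have hnorm : ∀ j, ‖g j‖ = 1 := by
    have hN0 : N ≠ 0 := by rintro rfl; simp_all
    intro j
    simp [hg, norm_eq_one_of_pow_eq_one hz.pow_eq_one hN0, norm_eq_one_of_pow_eq_one hw hD]
  have hsq : ‖∑ x : ZMod D, g x.val‖ ^ 2 = D := by
    rw [RCLike.norm_sq_sum_eq_card_of_autocorrelation (fun x => hnorm _), ZMod.card]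
    intro m hm
    have hζ : z ^ (2 * m.val) ≠ 1 := fun h => hm <| (ZMod.val_eq_zero m).1 <|
      Nat.eq_zero_of_dvd_of_lt (hNm _ (hz.pow_eq_one_iff_dvd _ |>.1 h)) m.val_lt
    have hcorr : ∀ x : ZMod D, g (x + m).val * conj (g x.val)
        = (z ^ (2 * m.val)) ^ x.val * (z ^ (m.val ^ 2) * w ^ m.val) := fun x => by
      rw [ZMod.val_add, hperiodic.map_mod_nat, hshift, mul_right_comm, RCLike.mul_conj, hnorm]
      simp
    have hζD : (z ^ (2 * m.val)) ^ D = 1 := by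
      rw [← pow_mul, mul_right_comm, pow_mul, hz2D, one_pow]
    rw [Fintype.sum_congr _ _ hcorr, ← sum_mul,
      ← sum_range_eq_sum_zmod_val D (fun j => (z ^ (2 * m.val)) ^ j),
      geom_sum_eq_zero_of_pow_eq_one hζD hζ, zero_mul]
  rw [sum_range_eq_sum_zmod_val, ← hsq, Real.sqrt_sq (norm_nonneg _)]

/-- For any positive integer `D` and any integer `k`, the coefficient
`a_k = (1/D) ∑_{j=0}^{D-1} e^{iθ_j} e^{2πi jk/D}` with `θ_j = π j²/D` for even `D`
and `θ_j = 2π j²/D` for odd `D` has modulus `1/√D`. -/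
theorem stmt2 (D : ℕ) (hD : 0 < D) (k : ℤ) :
    ‖(1 / (D : ℂ)) * ∑ j ∈ Finset.range D,
        Complex.exp (Complex.I *
          ((if Even D then Real.pi * (j : ℝ) ^ 2 / D else 2 * Real.pi * (j : ℝ) ^ 2 / D : ℝ) : ℂ)) *
          Complex.exp (2 * Real.pi * Complex.I * (j : ℂ) * (k : ℂ) / D)‖
      = 1 / Real.sqrt D := by
  have hD0 : D ≠ 0 := hD.ne'
  obtain ⟨N, hz, hN, hND, hNm, hphase⟩ : ∃ N : ℕ,
      IsPrimitiveRoot (exp (2 * Real.pi * I / N)) N ∧ N ∣ 2 * D ∧ N ∣ D ^ 2 ∧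
      (∀ m : ℕ, N ∣ 2 * m → D ∣ m) ∧ ∀ j : ℕ,
        exp (I * ((if Even D then Real.pi * (j : ℝ) ^ 2 / D else 2 * Real.pi * (j : ℝ) ^ 2 / D :
          ℝ) : ℂ)) = exp (2 * Real.pi * I / N) ^ (j ^ 2) := by
    rcases Nat.even_or_odd D with hEven | hOdd
    · refine ⟨2 * D, isPrimitiveRoot_exp _ (by positivity), dvd_rfl, ?_, fun m => ?_, fun j => ?_⟩
      · obtain ⟨d, rfl⟩ := hEven; exact ⟨d, by ring⟩
      · exact (Nat.mul_dvd_mul_iff_left two_pos).1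
      · rw [if_pos hEven, ← exp_nat_mul]; congr 1; push_cast; field_simp
    · refine ⟨D, isPrimitiveRoot_exp _ hD0, dvd_mul_left _ _, dvd_pow_self _ two_ne_zero,
        fun m => Nat.Coprime.dvd_of_dvd_mul_left (Nat.coprime_two_right.2 hOdd), fun j => ?_⟩
      rw [if_neg (Nat.not_even_iff_odd.2 hOdd), ← exp_nat_mul]; congr 1; push_cast; field_simp
  have hlinear : ∀ j : ℕ, exp (2 * Real.pi * I * j * k / D) = exp (2 * Real.pi * I * k / D) ^ j :=
    fun j => by rw [← exp_nat_mul]; ring_nf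
  have hw : exp (2 * Real.pi * I * k / D) ^ D = 1 := by
    rw [← exp_nat_mul, ← exp_int_mul_two_pi_mul_I k]; congr 1; field_simp
  simp only [hphase, hlinear]
  rw [norm_mul, norm_sum_range_quadratic_phase hD0 hz hN hND hNm hw, norm_div, norm_one,
    Complex.norm_natCast, one_div_mul_eq_div, Real.sqrt_div_self']
end

section
/- Let D ≥ 1 and let a : Fin D → ℂ satisfy ∑_{k} conj(a_k)·a_{k⊕m} = δ_{m,0} for all m (where ⊕ is addition mod D). Then the D² states |ψ_{m,n}⟩ = ∑_k a_k |k⊕m⟩⊗|k⊕m⊕n⟩, for m,n ∈ {0,...,D−1}, form an orthonormal basis of ℂ^D ⊗ ℂ^D. -/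
/-! Coordinatewise `ψ_{m,n}(x, y) = [y - x = n] · a (x - m)`: the label `n` is the diagonal offset
`y - x`, so states with different `n` have disjoint supports, while for equal `n` the inner
product of `ψ_{m,n}` and `ψ_{m',n}` is the autocorrelation of `a` at shift `m - m'`. Being `D²`
orthonormal vectors in a space of dimension `D²`, they form a basis. -/

section ShiftState

variable {𝕜 G : Type*} [RCLike 𝕜] [AddCommGroup G] [Fintype G] [DecidableEq G]

noncomputable def shiftState (a : G → 𝕜) (mn : G × G) : EuclideanSpace 𝕜 (G × G) :=
  ∑ k : G, a k • EuclideanSpace.single (k + mn.1, k + mn.1 + mn.2) (1 : 𝕜)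

theorem shiftState_apply (a : G → 𝕜) (mn xy : G × G) :
    shiftState a mn xy = if xy.2 - xy.1 = mn.2 then a (xy.1 - mn.1) else 0 := by
  have hsupp : ∀ k : G,
      xy = (k + mn.1, k + mn.1 + mn.2) ↔ xy.2 - xy.1 = mn.2 ∧ k = xy.1 - mn.1 := by
    intro k
    constructor
    · rintro rfl; simp
    · rintro ⟨h2, rfl⟩; ext <;> simp [← h2]
  simp [shiftState, Pi.single_apply, hsupp, ite_and]

theorem inner_shiftState (a : G → 𝕜) (p q : G × G) :
    inner 𝕜 (shiftState a p) (shiftState a q) =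
      if p.2 = q.2 then ∑ k : G, (starRingEnd 𝕜) (a k) * a (k + (p.1 - q.1)) else 0 := by
  have hdiag : ∀ x : G, ∑ y : G, inner 𝕜 (shiftState a p (x, y)) (shiftState a q (x, y)) =
      if p.2 = q.2 then (starRingEnd 𝕜) (a (x - p.1)) * a (x - q.1) else 0 := by
    intro x
    rw [← Equiv.sum_comp (Equiv.addRight x)]
    split_ifs with h
    · simp [shiftState_apply, h, mul_comm]
    · simp [shiftState_apply, Ne.symm h]
  have hshift : ∑ x : G, (starRingEnd 𝕜) (a (x - p.1)) * a (x - q.1) =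
      ∑ k : G, (starRingEnd 𝕜) (a k) * a (k + (p.1 - q.1)) := by
    rw [← Equiv.sum_comp (Equiv.addRight p.1)]
    simp [add_sub_assoc]
  rw [PiLp.inner_apply, Fintype.sum_prod_type]
  simp only [hdiag]
  split_ifs <;> simp [hshift]

theorem orthonormal_shiftState {a : G → 𝕜}
    (ha : ∀ m : G, ∑ k : G, (starRingEnd 𝕜) (a k) * a (k + m) = if m = 0 then 1 else 0) :
    Orthonormal 𝕜 (shiftState a) := by
  rw [orthonormal_iff_ite]
  intro p q
  simp only [inner_shiftState, ha, sub_eq_zero, Prod.ext_iff]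
  split_ifs <;> tauto

end ShiftState

/-- If the coefficients `a : Fin D → ℂ` satisfy the autocorrelation conditions
`∑_k conj(a_k) a_{k⊕m} = δ_{m,0}`, then the `D²` states
`|ψ_{m,n}⟩ = ∑_k a_k |k⊕m⟩ ⊗ |k⊕m⊕n⟩` form an orthonormal basis of `ℂ^D ⊗ ℂ^D`. -/
theorem stmt5 (D : ℕ) [NeZero D] (a : Fin D → ℂ)
    (ha : ∀ m : Fin D, ∑ k : Fin D, (starRingEnd ℂ) (a k) * a (k + m)
        = if m = 0 then 1 else 0) :
    ∃ b : OrthonormalBasis (Fin D × Fin D) ℂ (EuclideanSpace ℂ (Fin D × Fin D)),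
      ∀ mn : Fin D × Fin D,
        b mn = ∑ k : Fin D,
          a k • EuclideanSpace.single (k + mn.1, k + mn.1 + mn.2) (1 : ℂ) := by
  have hon := orthonormal_shiftState ha
  have hcard : Fintype.card (Fin D × Fin D) =
      Module.finrank ℂ (EuclideanSpace ℂ (Fin D × Fin D)) :=
    finrank_euclideanSpace.symm
  exact ⟨.mk hon (hon.linearIndependent.span_eq_top_of_card_eq_finrank' hcard).ge,
    fun mn => by rw [OrthonormalBasis.coe_mk]; rfl⟩
end

section
/- Let D ≥ 1 and a : Fin D → ℂ. The orthonormality conditions ∑_{k=0}^{D-1} conj(a_k)·a_{k⊕m} = δ_{m,0} for all m = 0,...,D−1 hold if and only if there exist real numbers θ_0,...,θ_{D-1} such that a_k = (1/D)·∑_{j=0}^{D-1} e^{iθ_j}·ω^{kj} for all k, where ω = e^{2πi/D}. -/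
/-!
Let `ω` be a primitive `D`-th root of unity and `â_j = ∑_k a_k ω^{-kj}`. Reindexing the double
sum `conj(â_j) â_j` by `k' = k + m` shows that `|â_j|²` is the transform of the cyclic
autocorrelation `c_m = ∑_k conj(a_k) a_{k+m}`. Since the transform is invertible and sends the
delta sequence to the constant `1`, `c = δ` iff `|â_j| = 1` for all `j`, i.e. `â_j = e^{iθ_j}`;
Fourier inversion turns this into the stated formula for `a`.
-/

open Finset ComplexConjugate

section RootOfUnity

variable {D : ℕ}

lemma pow_finVal_add {M : Type*} [Monoid M] {x : M} (hx : x ^ D = 1) (i j : Fin D) :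
    x ^ ((i + j : Fin D) : ℕ) = x ^ (i : ℕ) * x ^ (j : ℕ) := by
  rw [Fin.val_add, ← pow_eq_pow_mod _ hx, pow_add]

lemma IsPrimitiveRoot.sum_pow_finVal_mul {R : Type*} [CommRing R] [IsDomain R] [NeZero D]
    {ζ : R} (hζ : IsPrimitiveRoot ζ D) (m : Fin D) :
    ∑ k : Fin D, ζ ^ ((m : ℕ) * k) = if m = 0 then (D : R) else 0 := by
  split_ifs with hm
  · simp [hm, Finset.card_univ]
  · have hζm : ζ ^ (m : ℕ) ≠ 1 := hζ.pow_ne_one_of_pos_of_lt (Fin.val_ne_zero_iff.2 hm) m.isLt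
    have hgeom := geom_sum_mul (ζ ^ (m : ℕ)) D
    rw [pow_right_comm, hζ.pow_eq_one, one_pow, sub_self] at hgeom
    simpa only [pow_mul, Fin.sum_univ_eq_sum_range (fun k => (ζ ^ (m : ℕ)) ^ k)] using
      (mul_eq_zero.1 hgeom).resolve_right (sub_ne_zero.2 hζm)

lemma IsPrimitiveRoot.sum_pow_mul_inv_pow {K : Type*} [Field K] [NeZero D] {ζ : K}
    (hζ : IsPrimitiveRoot ζ D) (i j : Fin D) :
    ∑ k : Fin D, ζ ^ ((i : ℕ) * k) * ζ⁻¹ ^ ((j : ℕ) * k) = if i = j then (D : K) else 0 := by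
  have hshift (k : Fin D) :
      ζ ^ ((i : ℕ) * k) * ζ⁻¹ ^ ((j : ℕ) * k) = ζ ^ (((i - j : Fin D) : ℕ) * k) := by
    have hζk : (ζ ^ (k : ℕ)) ^ D = 1 := by rw [pow_right_comm, hζ.pow_eq_one, one_pow]
    have hcancel : (ζ ^ (k : ℕ)) ^ (j : ℕ) * (ζ⁻¹ ^ (k : ℕ)) ^ (j : ℕ) = 1 := by
      rw [← mul_pow, ← mul_pow, mul_inv_cancel₀ (hζ.ne_zero (NeZero.ne D)), one_pow, one_pow]
    simp only [pow_mul' ζ, pow_mul' ζ⁻¹]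
    rw [← sub_add_cancel i j, pow_finVal_add hζk, sub_add_cancel]
    linear_combination (ζ ^ (k : ℕ)) ^ ((i - j : Fin D) : ℕ) * hcancel
  simp only [hshift, hζ.sum_pow_finVal_mul, sub_eq_zero]

end RootOfUnity

section DFT

variable {D : ℕ}

def finDFT {R : Type*} [CommSemiring R] (ζ : R) (a : Fin D → R) (k : Fin D) : R :=
  ∑ j, a j * ζ ^ ((k : ℕ) * j)

lemma finDFT_smul {R : Type*} [CommSemiring R] (ζ c : R) (a : Fin D → R) :
    finDFT ζ (c • a) = c • finDFT ζ a := by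
  ext k
  simp only [finDFT, Pi.smul_apply, smul_eq_mul, mul_sum, mul_assoc]

variable {K : Type*} [Field K] [NeZero D] {ζ : K}

lemma IsPrimitiveRoot.finDFT_one (hζ : IsPrimitiveRoot ζ D) :
    finDFT ζ 1 = fun m : Fin D => if m = 0 then (D : K) else 0 := by
  ext m
  simp only [finDFT, Pi.one_apply, one_mul, hζ.sum_pow_finVal_mul]

lemma IsPrimitiveRoot.finDFT_inv_finDFT (hζ : IsPrimitiveRoot ζ D) (u : Fin D → K) :
    finDFT ζ⁻¹ (finDFT ζ u) = (D : K) • u := by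
  ext i
  calc finDFT ζ⁻¹ (finDFT ζ u) i
      = ∑ j, u j * ∑ k : Fin D, ζ ^ ((j : ℕ) * k) * ζ⁻¹ ^ ((i : ℕ) * k) := by
        simp only [finDFT, sum_mul, mul_sum]
        rw [sum_comm]
        refine sum_congr rfl fun j _ => sum_congr rfl fun k _ => ?_
        rw [mul_comm (k : ℕ) j]
        ring
    _ = (D : K) * u i := by
        simp only [hζ.sum_pow_mul_inv_pow, mul_ite, mul_zero, sum_ite_eq', mem_univ, if_true,
          mul_comm]

lemma IsPrimitiveRoot.eq_inv_smul_finDFT_iff (hζ : IsPrimitiveRoot ζ D) (a u : Fin D → K) :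
    a = (D : K)⁻¹ • finDFT ζ u ↔ finDFT ζ⁻¹ a = u := by
  have hD : (D : K) ≠ 0 := hζ.neZero'.out
  constructor
  · rintro rfl
    rw [finDFT_smul, hζ.finDFT_inv_finDFT, inv_smul_smul₀ hD]
  · rintro rfl
    have h := hζ.inv.finDFT_inv_finDFT a
    rw [inv_inv] at h
    rw [h, inv_smul_smul₀ hD]

end DFT

section Autocorrelation

variable {D : ℕ}

def autocorrelation (a : Fin D → ℂ) (m : Fin D) : ℂ :=
  ∑ k, conj (a k) * a (k + m)

lemma finDFT_inv_autocorrelation [NeZero D] {ζ : ℂ} (hζ : ζ ^ D = 1) (a : Fin D → ℂ)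
    (j : Fin D) :
    finDFT ζ⁻¹ (autocorrelation a) j = conj (finDFT ζ⁻¹ a j) * finDFT ζ⁻¹ a j := by
  have hconj : conj ζ⁻¹ = ζ := by
    rw [map_inv₀, ← Complex.inv_eq_conj (Complex.norm_eq_one_of_pow_eq_one hζ (NeZero.ne D)),
      inv_inv]
  have hζ0 : ζ ≠ 0 := by rintro rfl; simp [NeZero.ne D] at hζ
  have hcancel (k : Fin D) : (ζ ^ (j : ℕ)) ^ (k : ℕ) * (ζ⁻¹ ^ (j : ℕ)) ^ (k : ℕ) = 1 := by
    rw [← mul_pow, ← mul_pow, mul_inv_cancel₀ hζ0, one_pow, one_pow]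
  have hw : (ζ⁻¹ ^ (j : ℕ)) ^ D = 1 := by rw [pow_right_comm, inv_pow, hζ, inv_one, one_pow]
  calc finDFT ζ⁻¹ (autocorrelation a) j
      = ∑ k, ∑ m, conj (a k) * ζ ^ ((j : ℕ) * k) *
          (a (k + m) * ζ⁻¹ ^ ((j : ℕ) * (k + m : Fin D))) := by
        simp only [finDFT, autocorrelation, sum_mul]
        rw [sum_comm]
        refine sum_congr rfl fun k _ => sum_congr rfl fun m _ => ?_
        simp only [pow_mul, pow_finVal_add hw]
        linear_combination (-conj (a k) * a (k + m) * (ζ⁻¹ ^ (j : ℕ)) ^ (m : ℕ)) * hcancel k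
    _ = ∑ k, ∑ k', conj (a k) * ζ ^ ((j : ℕ) * k) * (a k' * ζ⁻¹ ^ ((j : ℕ) * k')) :=
        sum_congr rfl fun k _ => Equiv.sum_comp (Equiv.addLeft k)
          (fun k' => conj (a k) * ζ ^ ((j : ℕ) * k) * (a k' * ζ⁻¹ ^ ((j : ℕ) * k')))
    _ = conj (finDFT ζ⁻¹ a j) * finDFT ζ⁻¹ a j := by
        simp only [finDFT, map_sum, map_mul, map_pow, hconj, sum_mul_sum]

lemma IsPrimitiveRoot.autocorrelation_eq_ite_iff [NeZero D] {ζ : ℂ} (hζ : IsPrimitiveRoot ζ D)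
    (a : Fin D → ℂ) :
    (∀ m, autocorrelation a m = if m = 0 then 1 else 0) ↔ ∀ j, ‖finDFT ζ⁻¹ a j‖ = 1 := by
  have hδ : (fun m : Fin D => if m = 0 then (1 : ℂ) else 0) = (D : ℂ)⁻¹ • finDFT ζ 1 := by
    ext m
    simp [hζ.finDFT_one, NeZero.ne D]
  calc (∀ m, autocorrelation a m = if m = 0 then 1 else 0)
      ↔ autocorrelation a = (D : ℂ)⁻¹ • finDFT ζ 1 := by rw [← hδ, funext_iff]
    _ ↔ finDFT ζ⁻¹ (autocorrelation a) = 1 := hζ.eq_inv_smul_finDFT_iff _ _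
    _ ↔ ∀ j, conj (finDFT ζ⁻¹ a j) * finDFT ζ⁻¹ a j = 1 := by
        simp only [funext_iff, finDFT_inv_autocorrelation hζ.pow_eq_one, Pi.one_apply]
    _ ↔ ∀ j, ‖finDFT ζ⁻¹ a j‖ = 1 := by
        simp only [Complex.conj_mul']
        norm_cast
        simp only [pow_eq_one_iff_of_nonneg (norm_nonneg _) two_ne_zero]

end Autocorrelation

/-- The orthonormality conditions `∑_k conj(a_k) a_{k⊕m} = δ_{m,0}` hold if and only if
there exist real phases `θ_j` with `a_k = (1/D) ∑_j e^{iθ_j} ω^{kj}`, `ω = e^{2πi/D}`. -/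
theorem stmt6 (D : ℕ) [NeZero D] (a : Fin D → ℂ) :
    (∀ m : Fin D, ∑ k : Fin D, (starRingEnd ℂ) (a k) * a (k + m)
        = if m = 0 then 1 else 0) ↔
    ∃ θ : Fin D → ℝ, ∀ k : Fin D,
      a k = (1 / (D : ℂ)) * ∑ j : Fin D,
        Complex.exp (Complex.I * (θ j : ℂ)) *
          Complex.exp (2 * Real.pi * Complex.I / D) ^ ((k : ℕ) * (j : ℕ)) := by
  have hω : IsPrimitiveRoot (Complex.exp (2 * Real.pi * Complex.I / D)) D :=
    Complex.isPrimitiveRoot_exp D (NeZero.ne D)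
  calc _ ↔ ∀ j, ‖finDFT (Complex.exp (2 * Real.pi * Complex.I / D))⁻¹ a j‖ = 1 :=
        hω.autocorrelation_eq_ite_iff a
    _ ↔ ∃ θ : Fin D → ℝ, finDFT (Complex.exp (2 * Real.pi * Complex.I / D))⁻¹ a =
          fun j => Complex.exp (Complex.I * θ j) := by
        simp only [Complex.norm_eq_one_iff, funext_iff, eq_comm, mul_comm Complex.I]
        exact Classical.skolem
    _ ↔ _ := by
        simp only [← hω.eq_inv_smul_finDFT_iff, funext_iff, finDFT, Pi.smul_apply, smul_eq_mul,
          one_div]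
end

section
/- For D ≥ 2, the function f(t) = ∑_{r=1}^{D−1} r(D−r)·cot(πrt/D) is strictly decreasing on (0,1] and satisfies f(1) = 0; consequently f(t) > 0 for all t ∈ (0,1). -/
/-!
Each term `r (D - r) cot (π r t / D)` is strictly decreasing in `t ∈ (0, 1]`, because its argument
stays in `(0, π)` where `cot` decreases. At `t = 1` the reflection `r ↦ D - r` sends the sum to its
negative, since `cot (π - x) = - cot x`; so `f 1 = 0`, and positivity on `(0, 1)` follows.
-/

open Finset Set

namespace Real

theorem cot_pi_sub (x : ℝ) : cot (π - x) = -cot x := by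
  rw [cot_eq_cos_div_sin, cot_eq_cos_div_sin, cos_pi_sub, sin_pi_sub, neg_div]

theorem strictAntiOn_cot : StrictAntiOn cot (Ioo 0 π) := by
  intro a ⟨ha, _⟩ b ⟨_, hb⟩ hab
  have hsa : 0 < sin a := sin_pos_of_pos_of_lt_pi ha (hab.trans hb)
  have hsb : 0 < sin b := sin_pos_of_pos_of_lt_pi (ha.trans hab) hb
  have hsub : 0 < sin b * cos a - cos b * sin a := by
    rw [← sin_sub]; exact sin_pos_of_pos_of_lt_pi (by linarith) (by linarith)
  rw [cot_eq_cos_div_sin, cot_eq_cos_div_sin, div_lt_div_iff₀ hsb hsa]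
  linarith

end Real

open Real

theorem strictAntiOn_sum_mul_cot_mul {ι : Type*} {s : Finset ι} (hs : s.Nonempty) {w c : ι → ℝ}
    (hw : ∀ i ∈ s, 0 < w i) (hc : ∀ i ∈ s, 0 < c i ∧ c i < π) :
    StrictAntiOn (fun t ↦ ∑ i ∈ s, w i * cot (c i * t)) (Ioc 0 1) := by
  intro t ⟨ht, _⟩ u ⟨_, hu⟩ htu
  refine sum_lt_sum_of_nonempty hs fun i hi ↦ mul_lt_mul_of_pos_left ?_ (hw i hi)
  obtain ⟨hc₀, hcπ⟩ := hc i hi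
  have hcu : c i * u ≤ c i := mul_le_of_le_one_right hc₀.le hu
  exact strictAntiOn_cot ⟨by positivity, by linarith [mul_lt_mul_of_pos_left htu hc₀]⟩
    ⟨by nlinarith, by linarith⟩ (mul_lt_mul_of_pos_left htu hc₀)

theorem sum_Ico_mul_sub_mul_cot_eq_zero (D : ℕ) :
    ∑ r ∈ Ico 1 D, (r : ℝ) * ((D : ℝ) - r) * cot (π * r / D) = 0 := by
  set g : ℕ → ℝ := fun r ↦ (r : ℝ) * ((D : ℝ) - r) * cot (π * r / D)
  have hreflect : ∑ r ∈ Ico 1 D, g (D - r) = ∑ r ∈ Ico 1 D, g r := by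
    rw [sum_Ico_reflect g 1 (by omega), Nat.add_sub_cancel, Nat.add_sub_cancel_left]
  have hneg : ∑ r ∈ Ico 1 D, g (D - r) = -∑ r ∈ Ico 1 D, g r := by
    rw [← sum_neg_distrib]
    refine sum_congr rfl fun r hr ↦ ?_
    have hrD : r ≤ D := (mem_Ico.1 hr).2.le
    have hD : (D : ℝ) ≠ 0 := Nat.cast_ne_zero.2 (by have := mem_Ico.1 hr; omega)
    have harg : π * ((D : ℝ) - r) / D = π - π * r / D := by field_simp
    simp only [g, Nat.cast_sub hrD, harg, cot_pi_sub]
    ring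
  linarith

/-- For `D ≥ 2`, `f(t) = ∑_{r=1}^{D-1} r(D-r) cot(πrt/D)` is strictly decreasing on `(0,1]`,
vanishes at `t = 1`, and hence is strictly positive on `(0,1)`. -/
theorem stmt16 (D : ℕ) (hD : 2 ≤ D) (f : ℝ → ℝ)
    (hf : ∀ t : ℝ, f t = ∑ r ∈ Finset.Ico 1 D,
      (r : ℝ) * ((D : ℝ) - r) * Real.cot (Real.pi * r * t / D)) :
    StrictAntiOn f (Set.Ioc 0 1) ∧ f 1 = 0 ∧ ∀ t ∈ Set.Ioo (0 : ℝ) 1, 0 < f t := by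
  have hf' : f = fun t ↦ ∑ r ∈ Ico 1 D, (r : ℝ) * ((D : ℝ) - r) * cot (π * r / D * t) := by
    ext t; simp only [hf, mul_div_right_comm]
  have hr : ∀ r ∈ Finset.Ico 1 D, (0 : ℝ) < r ∧ (r : ℝ) < D := fun r hr ↦
    ⟨by exact_mod_cast (Finset.mem_Ico.1 hr).1, by exact_mod_cast (Finset.mem_Ico.1 hr).2⟩
  have hanti : StrictAntiOn f (Ioc 0 1) := by
    rw [hf']
    refine strictAntiOn_sum_mul_cot_mul ⟨1, mem_Ico.2 ⟨le_rfl, hD⟩⟩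
      (fun r hrs ↦ mul_pos (hr r hrs).1 (sub_pos.2 (hr r hrs).2)) fun r hrs ↦ ?_
    obtain ⟨hr₀, hrD⟩ := hr r hrs
    refine ⟨by positivity, ?_⟩
    rw [div_lt_iff₀ (hr₀.trans hrD)]
    exact mul_lt_mul_of_pos_left hrD pi_pos
  have hf1 : f 1 = 0 := by
    simpa only [hf, mul_one] using sum_Ico_mul_sub_mul_cot_eq_zero D
  refine ⟨hanti, hf1, fun t ht ↦ ?_⟩
  simpa only [hf1] using hanti ⟨ht.1, ht.2.le⟩ ⟨one_pos, le_rfl⟩ ht.2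
end

section
/- For D ≥ 2, the function C_G(t) = (2^{D−1}/D)·∏_{r=1}^{D−1}[sin²(πrt/D)]^{(D−r)/D} is strictly increasing on the open interval (0,1), with C_G(0⁺) limit values C_G(t) → 0 as t → 0⁺ and C_G(1) = (2^{D−1}/D)·∏_{r=1}^{D−1}[sin²(πr/D)]^{(D−r)/D}. -/
/-!
On `(0, 1]` all the sines `sin (π r t / D)` are positive, so `C_G = (2^{D-1}/D) · exp L` with
`L t = ∑ ((D - r)/D) log sin² (π r t / D)` and `L' t = (2π/D²) ∑ r (D - r) cot (π r t / D)`.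
Each cotangent term is strictly decreasing in `t`, and at `t = 1` the sum vanishes because the
reflection `r ↦ D - r` fixes the weight `r (D - r)` and negates `cot (π r / D)`; hence `L' > 0`
on `(0, 1)`. The limit at `0⁺` is continuity of `C_G` and the vanishing of its `r = 1` factor.
-/

open Finset Real

lemma Real.cot_lt_cot_of_lt {x y : ℝ} (hx : 0 < x) (hxy : x < y) (hy : y < π) :
    cot y < cot x := by
  have hsx : 0 < sin x := sin_pos_of_pos_of_lt_pi hx (hxy.trans hy)
  have hsy : 0 < sin y := sin_pos_of_pos_of_lt_pi (hx.trans hxy) hy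
  have hsub : 0 < sin (y - x) := sin_pos_of_pos_of_lt_pi (by linarith) (by linarith)
  rw [sin_sub] at hsub
  rw [cot_eq_cos_div_sin, cot_eq_cos_div_sin, div_lt_div_iff₀ hsy hsx]
  linarith

lemma Real.hasDerivAt_log_sin_sq_mul {c t : ℝ} (h : sin (c * t) ≠ 0) :
    HasDerivAt (fun x ↦ log (sin (c * x) ^ 2)) (2 * c * cot (c * t)) t := by
  have hsin : HasDerivAt (fun x ↦ sin (c * x)) (cos (c * t) * c) t :=
    (hasDerivAt_sin _).comp t ((hasDerivAt_id t).const_mul c |>.congr_deriv (mul_one c))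
  convert (hsin.fun_pow 2).log (pow_ne_zero 2 h) using 1
  rw [cot_eq_cos_div_sin]
  field_simp
  ring

lemma Finset.sum_Ico_eq_zero_of_reflect {M : Type*} [AddCommGroup M] [IsAddTorsionFree M]
    {n : ℕ} {f : ℕ → M} (hf : ∀ r ∈ Ico 1 n, f (n - r) = -f r) : ∑ r ∈ Ico 1 n, f r = 0 := by
  have h : ∑ r ∈ Ico 1 n, f r = -∑ r ∈ Ico 1 n, f r := by
    calc ∑ r ∈ Ico 1 n, f r = ∑ r ∈ Ico 1 n, f (n - r) := by
          rw [sum_Ico_reflect f 1 n.le_succ]; simp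
      _ = _ := by rw [← sum_neg_distrib]; exact sum_congr rfl hf
  rw [← two_nsmul_eq_zero, two_nsmul]
  exact eq_neg_iff_add_eq_zero.mp h

section

variable {D : ℕ}

lemma pi_mul_div_mem_Ioo {r : ℕ} (hr : r ∈ Ico 1 D) : π * r / D ∈ Set.Ioo 0 π := by
  obtain ⟨hr1, hrD⟩ := mem_Ico.mp hr
  have hrD' : (r : ℝ) < D := by exact_mod_cast hrD
  have hr0 : (0 : ℝ) < r := by exact_mod_cast hr1
  have hD0 : (0 : ℝ) < D := hr0.trans hrD'
  refine ⟨by positivity, ?_⟩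
  rw [div_lt_iff₀ hD0]
  exact mul_lt_mul_of_pos_left hrD' pi_pos

lemma sin_pi_mul_div_mul_pos {r : ℕ} (hr : r ∈ Ico 1 D) {t : ℝ} (ht : t ∈ Set.Ioc 0 1) :
    0 < sin (π * r / D * t) := by
  obtain ⟨hθ0, hθπ⟩ := pi_mul_div_mem_Ioo hr
  exact sin_pos_of_pos_of_lt_pi (mul_pos hθ0 ht.1)
    ((mul_le_of_le_one_right hθ0.le ht.2).trans_lt hθπ)

variable (D) in
lemma sum_mul_cot_pi_mul_div_eq_zero :
    ∑ r ∈ Ico 1 D, (r : ℝ) * ((D - r : ℕ) : ℝ) * cot (π * r / D) = 0 := by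
  refine sum_Ico_eq_zero_of_reflect fun r hr ↦ ?_
  obtain ⟨hr1, hrD⟩ := mem_Ico.mp hr
  have hangle : π * ((D - r : ℕ) : ℝ) / D = π - π * r / D := by
    have : (D : ℝ) ≠ 0 := by norm_cast; omega
    push_cast [Nat.cast_sub hrD.le]
    field_simp
  rw [Nat.sub_sub_self hrD.le, hangle, cot_eq_cos_div_sin, cot_eq_cos_div_sin, cos_pi_sub,
    sin_pi_sub]
  ring

lemma sum_mul_cot_pi_mul_div_mul_pos (hD : 2 ≤ D) {t : ℝ} (ht : t ∈ Set.Ioo 0 1) :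
    0 < ∑ r ∈ Ico 1 D, (r : ℝ) * ((D - r : ℕ) : ℝ) * cot (π * r / D * t) := by
  rw [← sum_mul_cot_pi_mul_div_eq_zero D]
  refine sum_lt_sum_of_nonempty (nonempty_Ico.mpr (by omega)) fun r hr ↦ ?_
  obtain ⟨hθ0, hθπ⟩ := pi_mul_div_mem_Ioo hr
  have hweight : (0 : ℝ) < r * ((D - r : ℕ) : ℝ) := by
    obtain ⟨hr1, hrD⟩ := mem_Ico.mp hr
    have : 0 < D - r := by omega
    positivity
  exact mul_lt_mul_of_pos_left
    (cot_lt_cot_of_lt (mul_pos hθ0 ht.1) (mul_lt_of_lt_one_right hθ0 ht.2) hθπ) hweight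

variable (D) in
-- `log (C_G t / (2^{D-1}/D))`, written with the angle `π r t / D` as `(π r / D) t`.
noncomputable def logConcurrence (t : ℝ) : ℝ :=
  ∑ r ∈ Ico 1 D, ((D - r : ℕ) : ℝ) / D * log (sin (π * r / D * t) ^ 2)

lemma hasDerivAt_logConcurrence {t : ℝ} (ht : t ∈ Set.Ioc 0 1) :
    HasDerivAt (logConcurrence D)
      (2 * π / D ^ 2 * ∑ r ∈ Ico 1 D, (r : ℝ) * ((D - r : ℕ) : ℝ) * cot (π * r / D * t)) t := by
  rw [mul_sum]
  refine HasDerivAt.fun_sum fun r hr ↦ ?_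
  exact ((hasDerivAt_log_sin_sq_mul (sin_pi_mul_div_mul_pos hr ht).ne').const_mul
    (((D - r : ℕ) : ℝ) / D)).congr_deriv (by ring)

lemma strictMonoOn_logConcurrence (hD : 2 ≤ D) :
    StrictMonoOn (logConcurrence D) (Set.Ioo 0 1) := by
  have hderiv {t : ℝ} (ht : t ∈ Set.Ioo 0 1) :=
    hasDerivAt_logConcurrence (D := D) (Set.Ioo_subset_Ioc_self ht)
  refine strictMonoOn_of_hasDerivWithinAt_pos (convex_Ioo 0 1)
    (fun t ht ↦ (hderiv ht).continuousAt.continuousWithinAt)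
    (fun t ht ↦ (hderiv (by rwa [interior_Ioo] at ht)).hasDerivWithinAt) fun t ht ↦ ?_
  rw [interior_Ioo] at ht
  have hD0 : (0 : ℝ) < D := by positivity
  exact mul_pos (by positivity) (sum_mul_cot_pi_mul_div_mul_pos hD ht)

lemma prod_sin_sq_rpow_eq_exp_logConcurrence {t : ℝ} (ht : t ∈ Set.Ioc 0 1) :
    ∏ r ∈ Ico 1 D, (sin (π * r * t / D) ^ 2) ^ (((D - r : ℕ) : ℝ) / D) =
      exp (logConcurrence D t) := by
  rw [logConcurrence, exp_sum]
  refine prod_congr rfl fun r hr ↦ ?_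
  rw [mul_div_right_comm, rpow_def_of_pos (pow_pos (sin_pi_mul_div_mul_pos hr ht) 2), mul_comm]

lemma continuous_prod_sin_sq_rpow :
    Continuous fun t : ℝ ↦ ∏ r ∈ Ico 1 D, (sin (π * r * t / D) ^ 2) ^ (((D - r : ℕ) : ℝ) / D) :=
  continuous_finsetProd _ fun r _ ↦
    (continuous_rpow_const (by positivity)).comp (by fun_prop)

lemma prod_sin_sq_rpow_zero (hD : 2 ≤ D) :
    ∏ r ∈ Ico 1 D, (sin (π * r * 0 / D) ^ 2) ^ (((D - r : ℕ) : ℝ) / D) = 0 := by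
  refine prod_eq_zero (i := 1) (mem_Ico.mpr ⟨le_rfl, by omega⟩) ?_
  have hexp : ((D - 1 : ℕ) : ℝ) / D ≠ 0 := by
    have : 0 < D - 1 := by omega
    positivity
  simp [zero_rpow hexp]

end

/-- For `D ≥ 2`, the G-concurrence `C_G(t) = (2^{D-1}/D) ∏_{r=1}^{D-1} [sin²(πrt/D)]^{(D-r)/D}`
is strictly increasing on `(0,1)`, tends to `0` as `t → 0⁺`, and at `t = 1` equals
`(2^{D-1}/D) ∏_{r=1}^{D-1} [sin²(πr/D)]^{(D-r)/D}`. -/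
theorem stmt17 (D : ℕ) (hD : 2 ≤ D) (C : ℝ → ℝ)
    (hC : ∀ t : ℝ, C t = (2 : ℝ) ^ (D - 1) / D * ∏ r ∈ Finset.Ico 1 D,
      (Real.sin (Real.pi * r * t / D) ^ 2) ^ (((D - r : ℕ) : ℝ) / D)) :
    StrictMonoOn C (Set.Ioo 0 1) ∧
    Filter.Tendsto C (nhdsWithin 0 (Set.Ioi 0)) (nhds 0) ∧
    C 1 = (2 : ℝ) ^ (D - 1) / D * ∏ r ∈ Finset.Ico 1 D,
      (Real.sin (Real.pi * r / D) ^ 2) ^ (((D - r : ℕ) : ℝ) / D) := by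
  have hK : (0 : ℝ) < 2 ^ (D - 1) / D := by positivity
  refine ⟨?_, ?_, by simp only [hC, mul_one]⟩
  · refine ((exp_strictMono.const_mul hK).comp_strictMonoOn
      (strictMonoOn_logConcurrence hD)).congr fun t ht ↦ ?_
    rw [hC, prod_sin_sq_rpow_eq_exp_logConcurrence (Set.Ioo_subset_Ioc_self ht)]
    rfl
  · have hcont : Continuous C := by
      rw [show C = _ from funext hC]
      exact continuous_prod_sin_sq_rpow.const_mul _
    have hC0 : C 0 = 0 := by rw [hC, prod_sin_sq_rpow_zero hD, mul_zero]
    simpa only [hC0] using (hcont.tendsto 0).mono_left (nhdsWithin_le_nhds (s := Set.Ioi 0))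
end
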